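/- arXiv:1211.2310 — 3 statements merged into one kernel-verified Lean document; each statement's English description precedes it below -/
import Mathlib

section
/- If C is a category with pushouts, then for any two 2-cospans x and y in C with s(x) = t(y) (their underlying 1-cospans agree), the composite x ⊗²₁ y defined by pushing out the apex objects over the shared middle object A⁺₁ is again a 2-cospan with the expected boundary: its 1-source equals the 1-source of y's other face and its 1-target equals the 1-target of x's other face as described by the octahedral diagram. -/
open CategoryTheory CategoryTheory.Limits

theorem CategoryTheory.CommSq.comp_bottom_eq_comp_right {C : Type*} [Category C] {A M X Y Z : C}
    {f : M ⟶ X} {g : M ⟶ Y} {i : X ⟶ Z} {j : Y ⟶ Z} (sq : CommSq f g i j)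
    {a : A ⟶ M} {s : A ⟶ X} {t : A ⟶ Y} (hs : a ≫ f = s) (ht : t = a ≫ g) :
    t ≫ j = s ≫ i := by
  rw [ht, ← hs, Category.assoc, Category.assoc, sq.w]

theorem twoCospan_pushout_comp {C : Type*} [Category C] [HasPushouts C]
    {A0p A0m M P Q X Y : C}
    (l : A0p ⟶ M) (r : A0m ⟶ M)
    (ltx : A0p ⟶ P) (rtx : A0m ⟶ P) (up : P ⟶ X) (f : M ⟶ X)
    (lq : A0p ⟶ Q) (rq : A0m ⟶ Q) (uq : Q ⟶ Y) (g : M ⟶ Y)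
    (hx1 : l ≫ f = ltx ≫ up) (hx2 : r ≫ f = rtx ≫ up)
    (hy1 : lq ≫ uq = l ≫ g) (hy2 : rq ≫ uq = r ≫ g) :
    lq ≫ uq ≫ pushout.inr f g = ltx ≫ up ≫ pushout.inl f g ∧
    rq ≫ uq ≫ pushout.inr f g = rtx ≫ up ≫ pushout.inl f g := by
  have sq : CommSq f g (pushout.inl f g) (pushout.inr f g) := ⟨pushout.condition⟩
  simp only [← Category.assoc]
  exact ⟨sq.comp_bottom_eq_comp_right hx1 hy1, sq.comp_bottom_eq_comp_right hx2 hy2⟩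
end

section
/- The composition of 2-cospans over a shared 1-cospan via pushout is associative up to canonical isomorphism: for composable 2-cospans x, y, z, there is a canonical isomorphism (x ⊗²₁ y) ⊗²₁ z ≅ x ⊗²₁ (y ⊗²₁ z) induced by the universal property of the pushout. -/
/-! A composite 2-cospan is represented by its apex: `(x ⊗²₁ y) ⊗²₁ z` has apex
`pushout (h ≫ pushout.inr f g) k` and `x ⊗²₁ (y ⊗²₁ z)` has apex `pushout f (g ≫ pushout.inl h k)`.
Both are colimits of the same zigzag `X ← M → Y ← N → Z` (pasting of pushout squares), so
Mathlib's `pushoutAssoc` is the comparison isomorphism. -/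

open CategoryTheory CategoryTheory.Limits

theorem twoCospan_pushout_assoc {C : Type*} [Category C] [HasPushouts C]
    {M X Y N Z : C} (f : M ⟶ X) (g : M ⟶ Y) (h : N ⟶ Y) (k : N ⟶ Z) :
    ∃ e : pushout (h ≫ pushout.inr f g) k ≅ pushout f (g ≫ pushout.inl h k),
      pushout.inl f g ≫ pushout.inl (h ≫ pushout.inr f g) k ≫ e.hom =
        pushout.inl f (g ≫ pushout.inl h k) ∧
      pushout.inr (h ≫ pushout.inr f g) k ≫ e.hom =
        pushout.inr h k ≫ pushout.inr f (g ≫ pushout.inl h k) :=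
  ⟨pushoutAssoc f g h k, inl_inl_pushoutAssoc_hom f g h k, inr_pushoutAssoc_hom f g h k⟩
end

section
/- The tensor product of T-graphs over a fixed globular set G is associative up to canonical isomorphism: for T-graphs X, Y, Z over G, (X ⊗ Y) ⊗ Z ≅ X ⊗ (Y ⊗ Z), where ⊗ is defined by pullback along the cartesian monad T. -/
/-!  STATEMENT 13: The tensor product of T-graphs over a fixed object `G`, defined by
pullback along a cartesian monad `T`, is associative up to canonical isomorphism:
`(X ⊗ Y) ⊗ Z ≅ X ⊗ (Y ⊗ Z)`. -/

open CategoryTheory CategoryTheory.Limits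

/-- A `T`-graph over `G`: a span `T(G) ← C → G`. -/
structure TGraph {C : Type*} [Category C] (T : Monad C) (G : C) where
  car : C
  d : car ⟶ T.obj G
  c : car ⟶ G

namespace TGraph

variable {C : Type*} [Category C] [HasPullbacks C] {T : Monad C} {G : C}

/-- The tensor `(C,d,c) ⊗ (C',d',c') = (T(C) ×_{T(G)} C', μ(G)∘T(d)∘π₀, c'∘π₁)`,
pulling back `T(c) : T(C) → T(G)` against `d' : C' → T(G)`. -/
noncomputable def tensor (X Y : TGraph T G) : TGraph T G where
  car := pullback (T.map X.c) Y.d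
  d := pullback.fst (T.map X.c) Y.d ≫ T.map X.d ≫ T.μ.app G
  c := pullback.snd (T.map X.c) Y.d ≫ Y.c

/-- The unit `T`-graph `I(G) = (G, η(G), 1_G)`. -/
def unitGraph (T : Monad C) (G : C) : TGraph T G :=
  ⟨G, T.η.app G, 𝟙 G⟩

end TGraph

/-!
Write `X ⊗ Y = T X ×_{T G} Y`. Since `T` preserves pullbacks, `T (X ⊗ Y) = T² X ×_{T² G} T Y`,
and pasting the cartesian `μ`-square at `X.c` below it shows that `T (X ⊗ Y)` is also
`T X ×_{T G} T Y`, formed along `μ_G ∘ T Y.d`. In the grid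
```
X ⊗ (Y ⊗ Z) ──→ Y ⊗ Z ──→ Z
     │            │        │
 T (X ⊗ Y) ────→ T Y ───→ T G
     │            │
    T X ───────→ T G
```
the left column is the pullback defining `X ⊗ (Y ⊗ Z)`, so by pasting the top-left square is a
pullback, and then so is the top row, which is the pullback defining `(X ⊗ Y) ⊗ Z`. Monad
associativity makes the `d`-legs agree.
-/

namespace CategoryTheory.Monad

variable {C : Type*} [Category C] (T : Monad C)

theorem map_comp_map_comp_mu_comp_mu {A B D : C} (f : A ⟶ T.obj B) (g : B ⟶ T.obj D) :
    T.map (f ≫ T.map g ≫ T.μ.app D) ≫ T.μ.app D =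
      T.map f ≫ T.μ.app B ≫ T.map g ≫ T.μ.app D := by
  simp only [Functor.map_comp, Category.assoc, T.assoc, T.mu_naturality_assoc]

theorem isPullback_map_pullback_mu {A B D : C} (a : A ⟶ B) (d : D ⟶ T.obj B)
    [HasPullback (T.map a) d] [PreservesLimit (cospan (T.map a) d) (T : C ⥤ C)]
    (hμ : IsPullback (T.map (T.map a)) (T.μ.app A) (T.μ.app B) (T.map a)) :
    IsPullback (T.map (pullback.snd (T.map a) d))
      (T.map (pullback.fst (T.map a) d) ≫ T.μ.app A) (T.map d ≫ T.μ.app B) (T.map a) :=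
  ((T : C ⥤ C).map_isPullback (IsPullback.of_hasPullback (T.map a) d)).flip.paste_vert hμ

end CategoryTheory.Monad

namespace TGraph

variable {C : Type*} [Category C] [HasPullbacks C] {T : Monad C} {G : C}

theorem exists_isPullback_tensor_tensor (X Y Z : TGraph T G)
    [PreservesLimit (cospan (T.map X.c) Y.d) (T : C ⥤ C)]
    (hμ : IsPullback (T.map (T.map X.c)) (T.μ.app X.car) (T.μ.app G) (T.map X.c)) :
    ∃ m : (X.tensor (Y.tensor Z)).car ⟶ T.obj (X.tensor Y).car,
      IsPullback m (pullback.snd _ _ ≫ pullback.snd _ _) (T.map (X.tensor Y).c) Z.d ∧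
      m ≫ T.map (pullback.fst _ _) ≫ T.μ.app X.car = pullback.fst _ _ := by
  have hXY := T.isPullback_map_pullback_mu X.c Y.d hμ
  have hX_YZ := (IsPullback.of_hasPullback (T.map X.c) (Y.tensor Z).d).flip
  have hYZ := (IsPullback.of_hasPullback (T.map Y.c) Z.d).flip
  have h := ((hX_YZ.of_bot' hXY).paste_horiz hYZ).flip
  rw [← Functor.map_comp] at h
  exact ⟨_, h, hXY.lift_snd _ _ _⟩

end TGraph

theorem tgraph_tensor_assoc_general {C : Type*} [Category C] [HasPullbacks C]
    (T : Monad C) (G : C)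
    (hμ : ∀ {X Y : C} (f : X ⟶ Y),
      IsPullback (T.map (T.map f)) (T.μ.app X) (T.μ.app Y) (T.map f))
    [PreservesLimitsOfShape WalkingCospan (T : C ⥤ C)]
    (X Y Z : TGraph T G) :
    ∃ e : ((X.tensor Y).tensor Z).car ≅ (X.tensor (Y.tensor Z)).car,
      ((X.tensor Y).tensor Z).d = e.hom ≫ (X.tensor (Y.tensor Z)).d ∧
      ((X.tensor Y).tensor Z).c = e.hom ≫ (X.tensor (Y.tensor Z)).c := by
  obtain ⟨m, hm, hmμ⟩ := TGraph.exists_isPullback_tensor_tensor X Y Z (hμ X.c)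
  refine ⟨hm.isoPullback.symm, (Iso.eq_inv_comp _).2 ?_, (Iso.eq_inv_comp _).2 ?_⟩
  · exact (hm.isoPullback_hom_fst_assoc _).trans <|
      (congrArg (m ≫ ·) (T.map_comp_map_comp_mu_comp_mu _ _)).trans ((reassoc_of% hmμ) _)
  · exact (hm.isoPullback_hom_snd_assoc _).trans (Category.assoc _ _ _)

/-- If `T` is cartesian (the naturality squares of `η` and `μ` are
pullbacks and `T` preserves pullbacks), the tensor of `T`-graphs over `G` is associative
up to canonical isomorphism of spans. -/
theorem tgraph_tensor_assoc {C : Type*} [Category C] [HasPullbacks C]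
    (T : Monad C) (G : C)
    (hη : ∀ {X Y : C} (f : X ⟶ Y), IsPullback f (T.η.app X) (T.η.app Y) (T.map f))
    (hμ : ∀ {X Y : C} (f : X ⟶ Y),
      IsPullback (T.map (T.map f)) (T.μ.app X) (T.μ.app Y) (T.map f))
    [PreservesLimitsOfShape WalkingCospan (T : C ⥤ C)]
    (X Y Z : TGraph T G) :
    ∃ e : ((X.tensor Y).tensor Z).car ≅ (X.tensor (Y.tensor Z)).car,
      ((X.tensor Y).tensor Z).d = e.hom ≫ (X.tensor (Y.tensor Z)).d ∧
      ((X.tensor Y).tensor Z).c = e.hom ≫ (X.tensor (Y.tensor Z)).c :=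
  tgraph_tensor_assoc_general T G hμ X Y Z
end
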